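/- arXiv:1004.5340 — 4 statements merged into one kernel-verified Lean document; each statement's English description precedes it below -/
import Mathlib

section
/- For the cubic field F = Q(w) with w^3 - 11w - 11 = 0, the ring of integers of F equals Z[w]. -/
/-!
The discriminant of `1, w, w²` is `4 · 11³ - 27 · 11² = 11² · 17`, so `11² · 17 · x ∈ ℤ[w]` for
every integral `x`. As `X³ - 11X - 11` is Eisenstein at 11, the factor `11²` can be dropped.
The factor 17 can be dropped because 17² does not divide the discriminant: if
`17 x = a + b w + c w²` with, say, `17 ∤ c`, then `1, w, x` are integral elements whose
discriminant `(c / 17)² · 11² · 17` is not an integer.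
-/

open Polynomial Matrix

theorem Matrix.det_one_updateCol {n α : Type*} [Fintype n] [DecidableEq n] [CommRing α]
    (j : n) (c : n → α) : (updateCol (1 : Matrix n n α) j c).det = c j := by
  simpa [one_apply] using det_updateCol_sum (1 : Matrix n n α) j c

theorem Algebra.discr_powerBasis_of_minpoly_eq_cubic {K L : Type*} [Field K] [Field L]
    [Algebra K L] (B : PowerBasis K L) {a b : K} (h : minpoly K B.gen = X ^ 3 - C a * X - C b) :
    discr K B.basis = 4 * a ^ 3 - 27 * b ^ 2 := by
  have hdim : B.dim = 3 := by rw [← B.natDegree_minpoly, h]; compute_degree!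
  have hmul := B.leftMulMatrix
  rw [B.minpolyGen_eq, h] at hmul
  obtain ⟨w, n, basis, hpow⟩ := B
  dsimp only at hdim hmul ⊢
  subst hdim
  have hmul' : leftMulMatrix basis w = !![0, 0, b; 1, 0, a; 0, 1, 0] := by
    rw [hmul]
    ext i j
    fin_cases i <;> fin_cases j <;> simp [coeff_X, coeff_C]
  have htr (k : ℕ) : trace K L (w ^ k) = (!![0, 0, b; 1, 0, a; 0, 1, 0] ^ k).trace := by
    rw [trace_eq_matrix_trace basis, map_pow, hmul']
  have hT : traceMatrix K basis = !![3, 0, 2 * a; 0, 2 * a, 3 * b; 2 * a, 3 * b, 2 * a ^ 2] := by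
    ext i j
    rw [traceMatrix_apply, traceForm_apply, hpow, hpow, ← pow_add, htr]
    fin_cases i <;> fin_cases j <;> simp [pow_succ, trace_fin_three] <;> ring
  rw [discr_def, hT, det_fin_three]
  simp only [of_apply, cons_val', cons_val_zero, cons_val_one, cons_val, cons_val_fin_one]
  ring

theorem natDegree_X_pow_three_sub_C_mul_X_sub_C {R : Type*} [CommRing R] [Nontrivial R] (p : R) :
    (X ^ 3 - C p * X - C p).natDegree = 3 := by
  compute_degree!

theorem isEisensteinAt_X_pow_three_sub_C_mul_X_sub_C {R : Type*} [CommRing R] [IsDomain R]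
    {p : R} (hp : Prime p) : (X ^ 3 - C p * X - C p).IsEisensteinAt (Ideal.span {p}) := by
  refine ⟨?_, fun {n} hn => ?_, ?_⟩
  · rw [Monic.leadingCoeff (by monicity!), Ideal.mem_span_singleton]
    exact hp.not_dvd_one
  · rw [natDegree_X_pow_three_sub_C_mul_X_sub_C] at hn
    interval_cases n <;> simp [coeff_X, coeff_C]
  · have h0 : (X ^ 3 - C p * X - C p).coeff 0 = -p := by simp
    rw [h0, Ideal.span_singleton_pow, Ideal.mem_span_singleton, dvd_neg, sq]
    exact fun h => hp.not_dvd_one ((mul_dvd_mul_iff_left hp.ne_zero).1 (by simpa using h))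

theorem irreducible_X_pow_three_sub_C_mul_X_sub_C {R : Type*} [CommRing R] [IsDomain R]
    {p : R} (hp : Prime p) : Irreducible (X ^ 3 - C p * X - C p) :=
  (isEisensteinAt_X_pow_three_sub_C_mul_X_sub_C hp).irreducible
    ((Ideal.span_singleton_prime hp.ne_zero).2 hp) (Monic.isPrimitive (by monicity!))
    (by rw [natDegree_X_pow_three_sub_C_mul_X_sub_C]; norm_num)

theorem minpoly.isIntegrallyClosed_eq_of_irreducible_of_monic {R S : Type*} [CommRing R]
    [IsDomain R] [IsIntegrallyClosed R] [CommRing S] [IsDomain S] [Algebra R S]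
    [Module.IsTorsionFree R S] {f : R[X]} (hirr : Irreducible f) (hmonic : f.Monic) {x : S}
    (hx : Polynomial.aeval x f = 0) : minpoly R x = f :=
  have hxint : IsIntegral R x := ⟨f, hmonic, hx⟩
  eq_of_monic_of_associated (minpoly.monic hxint) hmonic
    ((minpoly.irreducible hxint).associated_of_dvd hirr (minpoly.isIntegrallyClosed_dvd hxint hx))

section

variable {R K L : Type*} [CommRing R] [IsDomain R] [IsIntegrallyClosed R] [Field K]
  [Algebra R K] [IsFractionRing R K] [Field L] [Algebra K L] [Algebra R L] [IsScalarTower R K L]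

theorem mem_span_of_prime_smul_mem_span_of_sq_not_dvd_discr [Module.Finite K L] {ι : Type*}
    [Fintype ι] [DecidableEq ι] {b : ι → L} (hb : ∀ i, IsIntegral R (b i)) {p d : R} (hp : Prime p)
    (hd : Algebra.discr K b = algebraMap R K d) (hpd : ¬ p ^ 2 ∣ d) {x : L} (hx : IsIntegral R x)
    (hpx : p • x ∈ Submodule.span R (Set.range b)) : x ∈ Submodule.span R (Set.range b) := by
  obtain ⟨c, hc⟩ := (Submodule.mem_span_range_iff_exists_fun R).1 hpx
  have hpK : algebraMap R K p ≠ 0 :=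
    (map_ne_zero_iff _ (IsFractionRing.injective R K)).2 hp.ne_zero
  have hpL : algebraMap R L p ≠ 0 := by
    rw [IsScalarTower.algebraMap_apply R K L]
    exact (_root_.map_ne_zero _).2 hpK
  have hdvd : ∀ i, p ∣ c i := by
    intro i
    by_contra hi
    -- replacing `b i` by `x` multiplies the discriminant by `(c i / p) ^ 2`
    let P : Matrix ι ι K := updateCol 1 i fun j => algebraMap R K (c j) / algebraMap R K p
    have hbP : b ᵥ* P.map (algebraMap K L) = Function.update b i x := by
      ext j
      rcases eq_or_ne j i with rfl | hj
      · simp only [P, vecMul, dotProduct, map_apply, updateCol_self, map_div₀, Function.update_self]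
        rw [← mul_div_cancel_left₀ x hpL, ← Algebra.smul_def, ← hc, Finset.sum_div]
        refine Finset.sum_congr rfl fun k _ => ?_
        rw [Algebra.smul_def, IsScalarTower.algebraMap_apply R K L,
          IsScalarTower.algebraMap_apply R K L]
        ring
      · simp [P, vecMul, dotProduct, hj, one_apply]
    have hint : IsIntegral R (Algebra.discr K (Function.update b i x)) := by
      refine Algebra.discr_isIntegral K fun j => ?_
      rcases eq_or_ne j i with rfl | hj
      · simpa using hx
      · simpa [hj] using hb j
    obtain ⟨r, hr⟩ := IsIntegrallyClosed.isIntegral_iff.1 hint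
    rw [← hbP, Algebra.discr_of_matrix_vecMul, det_one_updateCol, hd, div_pow] at hr
    have hrp : r * p ^ 2 = c i ^ 2 * d := by
      apply IsFractionRing.injective R K
      rw [map_mul, map_mul, map_pow, map_pow, hr]
      field_simp
    exact hpd (hp.pow_dvd_of_dvd_mul_left 2 (fun h => hi (hp.dvd_of_dvd_pow h))
      ⟨r, by rw [← hrp, mul_comm]⟩)
  choose c' hc' using hdvd
  refine (Submodule.mem_span_range_iff_exists_fun R).2 ⟨c', mul_left_cancel₀ hpL ?_⟩
  simp only [← Algebra.smul_def, ← hc, hc', Finset.smul_sum, mul_smul]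

theorem PowerBasis.mem_adjoin_gen_iff_mem_span (B : PowerBasis K L) (hB : IsIntegral R B.gen)
    {y : L} : y ∈ Algebra.adjoin R {B.gen} ↔ y ∈ Submodule.span R (Set.range B.basis) := by
  constructor
  · intro hy
    rw [Algebra.adjoin_singleton_eq_range_aeval] at hy
    obtain ⟨f, rfl⟩ := hy
    have hdeg : (minpoly R B.gen).natDegree = B.dim := by
      rw [← B.natDegree_minpoly, minpoly.isIntegrallyClosed_eq_field_fractions' K hB,
        (minpoly.monic hB).natDegree_map]
    have := hB.mem_span_pow ⟨f, rfl⟩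
    rwa [hdeg, ← B.coe_basis] at this
  · refine fun hy => (Submodule.span_le (p := Subalgebra.toSubmodule (Algebra.adjoin R {B.gen}))).2
      (Set.range_subset_iff.2 fun i => ?_) hy
    rw [B.basis_eq_pow]
    exact Subalgebra.pow_mem _ (Algebra.self_mem_adjoin_singleton R _) _

theorem PowerBasis.mem_adjoin_of_prime_smul_mem_adjoin_of_sq_not_dvd_discr (B : PowerBasis K L)
    (hB : IsIntegral R B.gen) {p d : R} (hp : Prime p)
    (hd : Algebra.discr K B.basis = algebraMap R K d) (hpd : ¬ p ^ 2 ∣ d) {z : L}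
    (hz : IsIntegral R z) (hpz : p • z ∈ Algebra.adjoin R {B.gen}) :
    z ∈ Algebra.adjoin R {B.gen} := by
  have := B.finite
  rw [B.mem_adjoin_gen_iff_mem_span hB] at hpz ⊢
  refine mem_span_of_prime_smul_mem_span_of_sq_not_dvd_discr (fun i => ?_) hp hd hpd hz hpz
  rw [B.basis_eq_pow]
  exact hB.pow _

end

theorem stmt2 (F : Type) [Field F] [NumberField F] (w : F)
    (hw : w ^ 3 - 11 * w - 11 = 0) (hgen : Algebra.adjoin ℚ {w} = ⊤) :
    ∀ x : F, IsIntegral ℤ x ↔ x ∈ Algebra.adjoin ℤ {w} := by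
  have hmonic : (X ^ 3 - C 11 * X - C 11 : ℤ[X]).Monic := by monicity!
  have hfw : aeval w (X ^ 3 - C 11 * X - C 11 : ℤ[X]) = 0 := by
    simpa only [map_sub, map_mul, map_pow, aeval_X, map_ofNat] using hw
  have hwZ : IsIntegral ℤ w := ⟨_, hmonic, hfw⟩
  have hminZ : minpoly ℤ w = X ^ 3 - C 11 * X - C 11 :=
    minpoly.isIntegrallyClosed_eq_of_irreducible_of_monic
      (irreducible_X_pow_three_sub_C_mul_X_sub_C (by norm_num)) hmonic hfw
  have hminQ : minpoly ℚ w = X ^ 3 - C 11 * X - C 11 := by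
    rw [minpoly.isIntegrallyClosed_eq_field_fractions' ℚ hwZ, hminZ]
    simp only [Polynomial.map_sub, Polynomial.map_mul, Polynomial.map_pow, map_X, map_ofNat,
      Polynomial.map_ofNat]
  let B := PowerBasis.ofAdjoinEqTop (IsIntegral.of_finite ℚ w) hgen
  have hdiscr : Algebra.discr ℚ B.basis = algebraMap ℤ ℚ (11 ^ 2 * 17) := by
    rw [Algebra.discr_powerBasis_of_minpoly_eq_cubic B hminQ]
    norm_num
  intro x
  refine ⟨fun hx => ?_, fun hx => adjoin_le_integralClosure hwZ hx⟩
  have h2057 : (11 : ℤ) ^ 2 • (17 : ℤ) • x ∈ Algebra.adjoin ℤ {w} := by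
    have := Algebra.discr_mul_isIntegral_mem_adjoin ℚ (B := B) hwZ hx
    rwa [hdiscr, algebraMap_smul, ← smul_smul] at this
  have h17 := mem_adjoin_of_smul_prime_pow_smul_of_minpoly_isEisensteinAt (B := B) (by norm_num)
    hwZ (hx.smul 17) h2057 (hminZ ▸ isEisensteinAt_X_pow_three_sub_C_mul_X_sub_C (by norm_num))
  exact B.mem_adjoin_of_prime_smul_mem_adjoin_of_sq_not_dvd_discr hwZ (by norm_num) hdiscr
    (by norm_num) hx h17
end

section
/- In the cubic field F = Q(w) with w^3 - 11w - 11 = 0, the element -w^2 + 2w + 12 is a totally positive unit of Z[w]. -/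
theorem stmt4 (F : Type) [Field F] [NumberField F] (w : F)
    (hw : w ^ 3 - 11 * w - 11 = 0) (hgen : Algebra.adjoin ℚ {w} = ⊤) :
    (-w ^ 2 + 2 * w + 12) ∈ Algebra.adjoin ℤ {w} ∧
    (∃ y ∈ Algebra.adjoin ℤ {w}, (-w ^ 2 + 2 * w + 12) * y = 1) ∧
    ∀ φ : F →+* ℝ, 0 < φ (-w ^ 2 + 2 * w + 12) := by
  have hwmem : w ∈ Algebra.adjoin ℤ {w} := Algebra.subset_adjoin rfl
  refine ⟨?_, ⟨5 * w ^ 2 - 13 * w - 21, ?_, ?_⟩, ?_⟩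
  · exact add_mem (add_mem (neg_mem (pow_mem hwmem 2))
      (mul_mem (Subalgebra.natCast_mem _ 2) hwmem)) (Subalgebra.natCast_mem _ 12)
  · refine sub_mem (sub_mem (mul_mem (Subalgebra.natCast_mem _ 5) (pow_mem hwmem 2))
      (mul_mem (Subalgebra.natCast_mem _ 13) hwmem)) (Subalgebra.natCast_mem _ 21)
  · linear_combination (-5 * w + 23) * hw
  · intro φ
    have hx : φ w ^ 3 - 11 * φ w - 11 = 0 := by
      have := congrArg φ hw
      simpa [map_ofNat] using this
    set x := φ w with hxdef
    have h12 : φ (-w ^ 2 + 2 * w + 12) = -x ^ 2 + 2 * x + 12 := by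
      simp [hxdef, map_ofNat]
    rw [h12]
    nlinarith [sq_nonneg (x + 2), sq_nonneg (x - 4), sq_nonneg (x + 1), sq_nonneg x,
      sq_nonneg (x - 1), sq_nonneg (x + 3), sq_nonneg (x - 3), hx]
end

section
/- The quaternion algebra B = (w+1, -1 / F) over F = Q(w), w^3 - 11w - 11 = 0, is unramified at every finite place of F (its discriminant is the trivial ideal). -/
/-!
`B ⊗ F_v ≅ M₂(F_v)` as soon as `w + 1 = X² + Y²` in `F_v`: then `(w + 1, -1)` has the explicit
matrix representation `i ↦ [[X, Y], [Y, -X]]`, `j ↦ [[0, -1], [1, 0]]`. Now `w + 1` is a unit of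
`𝓞 F`, with inverse `w² - w - 10`. At an odd place, `x² + y² = w + 1` is solvable with `x ≠ 0` in
the finite residue field and lifts by Hensel's lemma. At a place above `2`, `x = 1 + w + 2w²`,
`y = 2w + w²` solve it modulo `8` with `x` a unit, which is what the form `|x² - c| < |2x|²` of
Hensel's lemma needs.
-/

open Quaternion NumberField IsDedekindDomain

section Hensel

variable {K : Type*} [NormedField K]

def sqNewton (c t : K) : K := t - (t ^ 2 - c) / (2 * t)

lemma sqNewton_sq_sub (c : K) {t : K} (ht : 2 * t ≠ 0) :
    sqNewton c t ^ 2 - c = ((t ^ 2 - c) / (2 * t)) ^ 2 := by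
  have h2 : (2 : K) ≠ 0 := left_ne_zero_of_mul ht
  have ht' : t ≠ 0 := right_ne_zero_of_mul ht
  unfold sqNewton
  field_simp
  ring

variable [IsUltrametricDist K]

lemma norm_two_mul_sqNewton {c t : K} (h : ‖t ^ 2 - c‖ < ‖2 * t‖ ^ 2) :
    ‖2 * sqNewton c t‖ = ‖2 * t‖ := by
  have hpos : 0 < ‖2 * t‖ := by
    by_contra h0
    nlinarith [norm_nonneg (t ^ 2 - c), norm_nonneg (2 * t)]
  have hcorr : ‖2 * ((t ^ 2 - c) / (2 * t))‖ < ‖2 * t‖ := by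
    rw [norm_mul, norm_div]
    calc ‖(2 : K)‖ * (‖t ^ 2 - c‖ / ‖2 * t‖) ≤ ‖t ^ 2 - c‖ / ‖2 * t‖ :=
          mul_le_of_le_one_left (by positivity)
            (by exact_mod_cast IsUltrametricDist.norm_natCast_le_one K 2)
      _ < ‖2 * t‖ := by rw [div_lt_iff₀ hpos]; nlinarith
  have hne : ‖2 * t‖ ≠ ‖-(2 * ((t ^ 2 - c) / (2 * t)))‖ := by
    rw [norm_neg]
    exact hcorr.ne'
  rw [sqNewton, mul_sub, sub_eq_add_neg, IsUltrametricDist.norm_add_eq_max_of_norm_ne_norm hne,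
    norm_neg, max_eq_left hcorr.le]

theorem exists_sq_eq_of_norm_sq_sub_lt [CompleteSpace K] {c s : K}
    (h : ‖s ^ 2 - c‖ < ‖2 * s‖ ^ 2) : ∃ x : K, x ^ 2 = c := by
  set δ := ‖2 * s‖
  set η := ‖s ^ 2 - c‖
  set ρ := η / δ ^ 2
  have hδ2 : 0 < δ ^ 2 := (norm_nonneg _).trans_lt h
  have hδ : 0 < δ := by
    by_contra! h0
    nlinarith [norm_nonneg (2 * s)]
  have hρ0 : 0 ≤ ρ := by positivity
  have hρ1 : ρ < 1 := (div_lt_one hδ2).2 h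
  set t : ℕ → K := fun n => (sqNewton c)^[n] s
  have ht_succ (n : ℕ) : t (n + 1) = sqNewton c (t n) := Function.iterate_succ_apply' _ _ _
  have hcorr {u : K} (hu : ‖2 * u‖ = δ) : ‖(u ^ 2 - c) / (2 * u)‖ = ‖u ^ 2 - c‖ / δ := by
    rw [norm_div, hu]
  -- the error is squared at each step, so it decays at least geometrically with ratio `ρ`
  have key (n : ℕ) : ‖2 * t n‖ = δ ∧ ‖t n ^ 2 - c‖ ≤ η * ρ ^ n := by
    induction n with
    | zero => simp [t, δ, η]
    | succ n ih =>
      obtain ⟨hδn, hηn⟩ := ih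
      have hle : ‖t n ^ 2 - c‖ ≤ η := hηn.trans (mul_le_of_le_one_right (norm_nonneg _)
        (pow_le_one₀ hρ0 hρ1.le))
      have h2t : 2 * t n ≠ 0 := norm_ne_zero_iff.mp (hδn ▸ hδ.ne')
      rw [ht_succ, norm_two_mul_sqNewton (by rw [hδn]; exact hle.trans_lt h), hδn,
        sqNewton_sq_sub c h2t, norm_pow, hcorr hδn]
      refine ⟨rfl, ?_⟩
      calc (‖t n ^ 2 - c‖ / δ) ^ 2 = ‖t n ^ 2 - c‖ * ‖t n ^ 2 - c‖ / δ ^ 2 := by ring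
        _ ≤ η * ρ ^ n * η / δ ^ 2 := by gcongr
        _ = η * ρ ^ (n + 1) := by rw [pow_succ]; ring
  have hdist (n : ℕ) : dist (t n) (t (n + 1)) ≤ η / δ * ρ ^ n := by
    rw [dist_eq_norm, ht_succ, sqNewton, sub_sub_cancel, hcorr (key n).1, div_mul_eq_mul_div]
    exact div_le_div_of_nonneg_right (key n).2 hδ.le
  obtain ⟨x, hx⟩ := cauchySeq_tendsto_of_complete (cauchySeq_of_le_geometric ρ _ hρ1 hdist)
  refine ⟨x, sub_eq_zero.mp (tendsto_nhds_unique ((hx.pow 2).sub_const c) ?_)⟩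
  refine squeeze_zero_norm (fun n => (key n).2) ?_
  simpa using (tendsto_pow_atTop_nhds_zero_of_lt_one hρ0 hρ1).const_mul η

end Hensel

namespace QuaternionAlgebra

variable {K : Type*} [Field K]

def Basis.ofSqSubMulSq (b x y : K) :
    Basis (Matrix (Fin 2) (Fin 2) K) (x ^ 2 - b * y ^ 2) 0 b where
  i := !![x, -(b * y); y, -x]
  j := !![0, b; 1, 0]
  k := !![-(b * y), b * x; -x, b * y]
  i_mul_i := by ext i j; fin_cases i <;> fin_cases j <;> simp [Matrix.one_fin_two] <;> ring
  j_mul_j := by ext i j; fin_cases i <;> fin_cases j <;> simp [Matrix.one_fin_two]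
  i_mul_j := by ext i j; fin_cases i <;> fin_cases j <;> simp [mul_comm]
  j_mul_i := by ext i j; fin_cases i <;> fin_cases j <;> simp

theorem nonempty_algEquiv_matrix_of_sq_sub_mul_sq_eq {a b x y : K} (h : x ^ 2 - b * y ^ 2 = a)
    (ha : a ≠ 0) (hb : b ≠ 0) (h2 : (2 : K) ≠ 0) :
    Nonempty (ℍ[K, a, b] ≃ₐ[K] Matrix (Fin 2) (Fin 2) K) := by
  subst h
  set φ := (Basis.ofSqSubMulSq b x y).liftHom
  have hsurj : Function.Surjective φ := by
    intro M
    set α := (M 0 0 - M 1 1) / 2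
    set β := (M 1 0 - M 0 1 / b) / 2
    refine ⟨⟨(M 0 0 + M 1 1) / 2, (α * x - b * y * β) / (x ^ 2 - b * y ^ 2),
      (M 0 1 / b + M 1 0) / 2, (y * α - x * β) / (x ^ 2 - b * y ^ 2)⟩, ?_⟩
    ext i j
    fin_cases i <;> fin_cases j <;>
      simp [φ, Basis.lift, Basis.ofSqSubMulSq, Matrix.algebraMap_matrix_apply, α, β] <;>
      field_simp <;> ring
  have hrank : Module.finrank K ℍ[K, x ^ 2 - b * y ^ 2, b] =
      Module.finrank K (Matrix (Fin 2) (Fin 2) K) := by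
    simp [QuaternionAlgebra.finrank_eq_four, Module.finrank_matrix]
  exact ⟨AlgEquiv.ofBijective φ
    ⟨(LinearMap.injective_iff_surjective_of_finrank_eq_finrank hrank (f := φ.toLinearMap)).2 hsurj,
      hsurj⟩⟩

end QuaternionAlgebra

open Polynomial in
theorem FiniteField.exists_sq_add_sq_eq_of_ne_zero {k : Type*} [Field k] [Finite k]
    (h2 : (2 : k) ≠ 0) {u : k} (hu : u ≠ 0) : ∃ x y : k, x ≠ 0 ∧ x ^ 2 + y ^ 2 = u := by
  have : Fintype k := Fintype.ofFinite k
  have hchar : ringChar k ≠ 2 := fun h => h2 (by exact_mod_cast h ▸ ringChar.Nat.cast_ringChar)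
  obtain ⟨a, b, hab⟩ := exists_root_sum_quadratic (f := X ^ 2) (g := X ^ 2 - C u)
    (degree_X_pow 2) (degree_X_pow_sub_C two_pos u) (odd_card_of_char_ne_two hchar)
  simp only [eval_pow, eval_X, eval_sub, eval_C] at hab
  rcases eq_or_ne a 0 with rfl | ha
  · refine ⟨b, 0, fun hb => hu ?_, by linear_combination hab⟩
    subst hb
    linear_combination -hab
  · exact ⟨a, b, ha, by linear_combination hab⟩

theorem Ideal.exists_sq_add_sq_sub_mem {R : Type*} [CommRing R] {P : Ideal R} [P.IsMaximal]
    [Finite (R ⧸ P)] (h2 : (2 : R) ∉ P) {u : R} (hu : u ∉ P) :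
    ∃ x y : R, x ∉ P ∧ x ^ 2 + y ^ 2 - u ∈ P := by
  let := Ideal.Quotient.field P
  simp only [← Ideal.Quotient.eq_zero_iff_mem] at h2 hu ⊢
  obtain ⟨x, y, hx, hxy⟩ :=
    FiniteField.exists_sq_add_sq_eq_of_ne_zero (by rwa [map_ofNat] at h2) hu
  obtain ⟨x, rfl⟩ := Ideal.Quotient.mk_surjective x
  obtain ⟨y, rfl⟩ := Ideal.Quotient.mk_surjective y
  exact ⟨x, y, hx, by simp [hxy]⟩

namespace NumberField.HeightOneSpectrum

open FinitePlace

variable {F : Type*} [Field F] [NumberField F] (v : HeightOneSpectrum (𝓞 F))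

theorem exists_sq_add_sq_eq_of_norm_lt {u x y : 𝓞 F} (hx : x ∉ v.asIdeal)
    (h : ‖embedding v ((x ^ 2 + y ^ 2 - u : 𝓞 F) : F)‖ < ‖embedding v (2 : F)‖ ^ 2) :
    ∃ X Y : v.adicCompletion F, X ^ 2 + Y ^ 2 = embedding v (u : F) := by
  have hx1 : ‖embedding v (x : F)‖ = 1 := (norm_eq_one_iff_notMem F v x).2 hx
  have hlt : ‖embedding v (x : F) ^ 2 - (embedding v (u : F) - embedding v (y : F) ^ 2)‖ <
      ‖2 * embedding v (x : F)‖ ^ 2 := by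
    rw [norm_mul, hx1, mul_one, ← map_ofNat (embedding v) 2]
    convert h using 2
    push_cast
    simp only [map_add, map_sub, map_pow]
    ring
  obtain ⟨X, hX⟩ := exists_sq_eq_of_norm_sq_sub_lt hlt
  exact ⟨X, embedding v (y : F), by rw [hX]; ring⟩

theorem exists_sq_add_sq_eq_of_two_notMem (h2 : (2 : 𝓞 F) ∉ v.asIdeal) {u : 𝓞 F}
    (hu : u ∉ v.asIdeal) : ∃ X Y : v.adicCompletion F, X ^ 2 + Y ^ 2 = embedding v (u : F) := by
  have := v.isMaximal
  obtain ⟨x, y, hx, hxy⟩ := Ideal.exists_sq_add_sq_sub_mem h2 hu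
  refine exists_sq_add_sq_eq_of_norm_lt v hx (y := y) ?_
  have h2' : ‖embedding v (2 : F)‖ = 1 := by
    rw [← map_ofNat (algebraMap (𝓞 F) F) 2]
    exact (norm_eq_one_iff_notMem F v 2).2 h2
  rw [h2', one_pow]
  exact (norm_lt_one_iff_mem F v _).2 hxy

theorem exists_sq_add_sq_eq_add_one_of_two_mem {W : 𝓞 F} (hW : W ^ 3 - 11 * W - 11 = 0)
    (h2 : (2 : 𝓞 F) ∈ v.asIdeal) :
    ∃ X Y : v.adicCompletion F, X ^ 2 + Y ^ 2 = embedding v ((W + 1 : 𝓞 F) : F) := by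
  have hx : 1 + W + 2 * W ^ 2 ∉ v.asIdeal := by
    intro hx
    apply v.isPrime.ne_top
    rw [Ideal.eq_top_iff_one]
    have hunit : (1 : 𝓞 F) =
        (1 + W + 2 * W ^ 2) * (W + W ^ 2) - 2 * (16 + 28 * W + 12 * W ^ 2) := by
      linear_combination -(3 + 2 * W) * hW
    rw [hunit]
    exact sub_mem (Ideal.mul_mem_right _ _ hx) (Ideal.mul_mem_right _ _ h2)
  refine exists_sq_add_sq_eq_of_norm_lt v hx (y := 2 * W + W ^ 2) ?_
  have hd : (1 + W + 2 * W ^ 2) ^ 2 + (2 * W + W ^ 2) ^ 2 - (W + 1) =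
      2 ^ 3 * (11 + 18 * W + 8 * W ^ 2) := by
    linear_combination (8 + 5 * W) * hW
  have h2lt : ‖embedding v (2 : F)‖ < 1 := by
    rw [← map_ofNat (algebraMap (𝓞 F) F) 2]
    exact (norm_lt_one_iff_mem F v 2).2 h2
  have h2pos : 0 < ‖embedding v (2 : F)‖ := by simp
  rw [hd]
  push_cast
  rw [map_mul, norm_mul, map_pow, norm_pow]
  calc ‖embedding v (2 : F)‖ ^ 3 * ‖embedding v ((11 + 18 * W + 8 * W ^ 2 : 𝓞 F) : F)‖
      ≤ ‖embedding v (2 : F)‖ ^ 3 * 1 := by gcongr; exact norm_le_one F v _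
    _ < ‖embedding v (2 : F)‖ ^ 2 := by
      rw [mul_one]
      exact pow_lt_pow_right_of_lt_one₀ h2pos h2lt (by norm_num)

theorem exists_sq_add_sq_eq_add_one {W : 𝓞 F} (hW : W ^ 3 - 11 * W - 11 = 0) :
    ∃ X Y : v.adicCompletion F, X ^ 2 + Y ^ 2 = embedding v ((W + 1 : 𝓞 F) : F) := by
  by_cases h2 : (2 : 𝓞 F) ∈ v.asIdeal
  · exact exists_sq_add_sq_eq_add_one_of_two_mem v hW h2
  · refine exists_sq_add_sq_eq_of_two_notMem v h2 fun h => v.isPrime.ne_top ?_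
    exact Ideal.eq_top_of_isUnit_mem _ h
      (IsUnit.of_mul_eq_one (W ^ 2 - W - 10) (by linear_combination hW))

end NumberField.HeightOneSpectrum

theorem stmt12_general (F : Type) [Field F] [NumberField F] (w : F)
    (hw : w ^ 3 - 11 * w - 11 = 0) :
    ∀ v : HeightOneSpectrum (𝓞 F),
      Nonempty (ℍ[v.adicCompletion F, algebraMap F (v.adicCompletion F) (w + 1),
          algebraMap F (v.adicCompletion F) (-1)]
        ≃ₐ[v.adicCompletion F] Matrix (Fin 2) (Fin 2) (v.adicCompletion F)) := by
  intro v
  have hint : IsIntegral ℤ w := by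
    refine ⟨Polynomial.X ^ 3 - (11 * Polynomial.X + 11), by monicity!, ?_⟩
    simp only [Polynomial.eval₂_sub, Polynomial.eval₂_add, Polynomial.eval₂_mul,
      Polynomial.eval₂_pow, Polynomial.eval₂_X, Polynomial.eval₂_ofNat]
    linear_combination hw
  set W : 𝓞 F := ⟨w, hint⟩
  have hW : W ^ 3 - 11 * W - 11 = 0 := RingOfIntegers.coe_injective (by push_cast; exact hw)
  obtain ⟨X, Y, hXY⟩ := HeightOneSpectrum.exists_sq_add_sq_eq_add_one v hW
  have hw1 : w + 1 ≠ 0 := fun h => by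
    rw [show w = -1 by linear_combination h] at hw
    norm_num at hw
  refine QuaternionAlgebra.nonempty_algEquiv_matrix_of_sq_sub_mul_sq_eq (x := X) (y := Y) ?_
    ((map_ne_zero _).2 hw1) ((map_ne_zero _).2 (neg_ne_zero.2 one_ne_zero)) ?_
  · rw [map_neg, map_one, neg_one_mul, sub_neg_eq_add, hXY]
    rfl
  · rw [← map_ofNat (algebraMap F (v.adicCompletion F)) 2]
    exact (map_ne_zero _).2 two_ne_zero

theorem stmt12 (F : Type) [Field F] [NumberField F] (w : F)
    (hw : w ^ 3 - 11 * w - 11 = 0) (hgen : Algebra.adjoin ℚ {w} = ⊤) :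
    ∀ v : HeightOneSpectrum (𝓞 F),
      Nonempty (ℍ[v.adicCompletion F, algebraMap F (v.adicCompletion F) (w + 1),
          algebraMap F (v.adicCompletion F) (-1)]
        ≃ₐ[v.adicCompletion F] Matrix (Fin 2) (Fin 2) (v.adicCompletion F)) :=
  stmt12_general F w hw
end

section
/- For the quaternion algebra B = (w+1, -1 / F) over F = Q(w) with w^3 - 11w - 11 = 0, the Z_F-lattice generated by 1, i, k = (1 + (w^2+1)i + ij)/2, and the products of these elements is an order of B (i.e., it is closed under multiplication and consists of integral elements). -/
/-!
Every element of the `ℤ`-algebra generated by `w`, `i` and `k = (1 + (w² + 1) i + ij) / 2` has the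
form `a + b i + c k + d ik` with `a, b, c, d ∈ 𝓞_F`: such elements form a ring because, once `w³`
is replaced by `11 w + 11`, the structure constants of the basis `1, i, k, ik` are integral
polynomials in `w` (the halves cancel, e.g. `(w + 1)(w² + 1) = w² + 12 w + 12`). For the same
reason the reduced trace `2a + c + (w² + 12 w + 12) d` and the reduced norm of such an element lie
in `𝓞_F`. Finally `1, i, k, ik` is an `F`-basis of `B` since `2` and `w + 1` are nonzero.
-/

open Quaternion NumberField Polynomial

section

variable {F : Type*} [Field F]

def quatI (a b : F) : ℍ[F, a, b] := ⟨0, 1, 0, 0⟩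

def quatJ (a b : F) : ℍ[F, a, b] := ⟨0, 0, 1, 0⟩

def quatK (w : F) : ℍ[F, w + 1, -1] :=
  (2 : F)⁻¹ • (1 + (w ^ 2 + 1) • quatI _ _ + quatI _ _ * quatJ _ _)

theorem span_one_quatI_quatK_eq_top [CharZero F] {w : F} (hw : w + 1 ≠ 0) :
    Submodule.span F
      ({1, quatI _ _, quatK w, quatI _ _ * quatK w} : Set ℍ[F, w + 1, -1]) = ⊤ := by
  refine Submodule.eq_top_iff'.2 fun x => ?_
  have hx : x = (x.re - x.imK - (w ^ 2 + 1) * x.imJ) • 1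
      + (x.imI - (w ^ 2 + 1) * x.imK - x.imJ / (w + 1)) • quatI _ _
      + (2 * x.imK) • quatK w + (2 * x.imJ / (w + 1)) • (quatI _ _ * quatK w) := by
    ext <;> simp [quatI, quatJ, quatK] <;> field_simp <;> ring
  rw [hx]
  refine add_mem (add_mem (add_mem ?_ ?_) ?_) ?_ <;>
    exact Submodule.smul_mem _ _ (Submodule.subset_span (by simp))

variable (F) {R : Type*} [CommRing R] [Algebra R F] (w : R)

def orderElt (a b c d : R) : ℍ[F, algebraMap R F w + 1, -1] :=
  a • 1 + b • quatI _ _ + c • quatK _ + d • (quatI _ _ * quatK _)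

theorem orderElt_eq_mk (a b c d : R) :
    orderElt F w a b c d =
      let φ := algebraMap R F
      ⟨φ a + 2⁻¹ * φ c + 2⁻¹ * ((φ w + 1) * (φ w ^ 2 + 1)) * φ d,
        φ b + 2⁻¹ * (φ w ^ 2 + 1) * φ c + 2⁻¹ * φ d, 2⁻¹ * (φ w + 1) * φ d, 2⁻¹ * φ c⟩ := by
  ext <;> simp [orderElt, quatK, quatI, quatJ] <;> simp only [Algebra.smul_def] <;> ring

theorem orderElt_add (a b c d a' b' c' d' : R) :
    orderElt F w a b c d + orderElt F w a' b' c' d' =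
      orderElt F w (a + a') (b + b') (c + c') (d + d') := by
  simp only [orderElt, add_smul]
  abel

theorem orderElt_neg (a b c d : R) :
    -orderElt F w a b c d = orderElt F w (-a) (-b) (-c) (-d) := by
  simp only [orderElt, neg_smul]
  abel

theorem algebraMap_eq_orderElt (r : R) :
    algebraMap F _ (algebraMap R F r) = orderElt F w r 0 0 0 := by
  simp [orderElt, Algebra.algebraMap_eq_smul_one]

theorem quatI_eq_orderElt : quatI _ _ = orderElt F w 0 1 0 0 := by
  simp [orderElt]

theorem quatK_eq_orderElt : quatK _ = orderElt F w 0 0 1 0 := by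
  simp [orderElt]

variable [CharZero F] {w}

theorem orderElt_mul (hw : w ^ 3 - 11 * w - 11 = 0) (a b c d A B C D : R) :
    orderElt F w a b c d * orderElt F w A B C D =
      orderElt F w
        (a * A + (1 + w) * (b * B) + (12 + 12 * w + w ^ 2) * (c * B)
          + (36 + 39 * w + 6 * w ^ 2) * (c * C) + (1 + w) * (d * B)
          - (102 + 141 * w + 45 * w ^ 2) * (d * D))
        (a * B + b * A + c * B + (12 + 12 * w + w ^ 2) * (d * B)
          - (36 + 39 * w + 6 * w ^ 2) * (c * D) + (36 + 39 * w + 6 * w ^ 2) * (d * C))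
        (a * C + c * A + (1 + w) * (b * D) + c * C + (12 + 12 * w + w ^ 2) * (c * D)
          - (1 + w) * (d * B))
        (a * D + d * A + b * C - c * B + d * C + (12 + 12 * w + w ^ 2) * (d * D)) := by
  have hw' := congrArg (algebraMap R F) hw
  simp only [map_sub, map_mul, map_pow, map_ofNat, map_zero] at hw'
  simp only [orderElt_eq_mk, QuaternionAlgebra.mk_mul_mk, map_add, map_sub, map_mul, map_pow,
    map_ofNat, map_one]
  set x := algebraMap R F w
  set a := algebraMap R F a
  set b := algebraMap R F b
  set c := algebraMap R F c
  set d := algebraMap R F d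
  set A := algebraMap R F A
  set B := algebraMap R F B
  set C := algebraMap R F C
  set D := algebraMap R F D
  ext <;> dsimp only
  · linear_combination (-35 * d * D / 4 + c * D / 2 + 13 * c * C / 4 + c * B - 3 * x * d * D
      + x * c * C / 4 + x ^ 2 * c * C / 4 + x ^ 3 * d * D / 4) * hw'
  · linear_combination (d * D / 2 + 13 * d * C / 4 + d * B - 11 * c * D / 4 + x * d * C / 4
      - x * c * D / 4 + x ^ 2 * d * C / 4 + x ^ 2 * c * D / 4) * hw'
  · linear_combination (d * D / 2 + x * d * D / 2) * hw'
  · linear_combination (c * D / 2) * hw'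

theorem orderElt_add_star (hw : w ^ 3 - 11 * w - 11 = 0) (a b c d : R) :
    orderElt F w a b c d + star (orderElt F w a b c d) =
      algebraMap F _ (algebraMap R F (2 * a + c + (12 + 12 * w + w ^ 2) * d)) := by
  have hw' := congrArg (algebraMap R F) hw
  simp only [map_sub, map_mul, map_pow, map_ofNat, map_zero] at hw'
  rw [QuaternionAlgebra.self_add_star', QuaternionAlgebra.coe_algebraMap, orderElt_eq_mk]
  congr 1
  simp only [map_add, map_mul, map_pow, map_ofNat]
  linear_combination algebraMap R F d * hw'

theorem orderElt_mul_star (hw : w ^ 3 - 11 * w - 11 = 0) (a b c d : R) :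
    orderElt F w a b c d * star (orderElt F w a b c d) =
      algebraMap F _ (algebraMap R F
        (a * a + a * c - (1 + w) * (b * b) - (12 + 12 * w + w ^ 2) * (b * c)
          - (1 + w) * (b * d) - (36 + 39 * w + 6 * w ^ 2) * (c * c)
          + (12 + 12 * w + w ^ 2) * (a * d) + (102 + 141 * w + 45 * w ^ 2) * (d * d))) := by
  have hw' := congrArg (algebraMap R F) hw
  simp only [map_sub, map_mul, map_pow, map_ofNat, map_zero] at hw'
  rw [QuaternionAlgebra.mul_star_eq_coe, QuaternionAlgebra.coe_algebraMap, orderElt_eq_mk]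
  congr 1
  simp only [QuaternionAlgebra.star_mk, QuaternionAlgebra.mk_mul_mk, map_add, map_sub, map_mul,
    map_pow, map_ofNat, map_one]
  set x := algebraMap R F w
  set a := algebraMap R F a
  set b := algebraMap R F b
  set c := algebraMap R F c
  set d := algebraMap R F d
  linear_combination (37 * d ^ 2 / 4 - 13 * c ^ 2 / 4 - b * c + a * d + 7 * x * d ^ 2 / 2
    - x * c ^ 2 / 4 + x ^ 2 * d ^ 2 / 2 - x ^ 2 * c ^ 2 / 4 + x ^ 3 * d ^ 2 / 4) * hw'

def orderSubring (hw : w ^ 3 - 11 * w - 11 = 0) : Subring ℍ[F, algebraMap R F w + 1, -1] where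
  carrier := {x | ∃ a b c d, x = orderElt F w a b c d}
  zero_mem' := ⟨0, 0, 0, 0, by simpa using algebraMap_eq_orderElt F w 0⟩
  one_mem' := ⟨1, 0, 0, 0, by simpa using algebraMap_eq_orderElt F w 1⟩
  add_mem' := by
    rintro _ _ ⟨a, b, c, d, rfl⟩ ⟨a', b', c', d', rfl⟩
    exact ⟨_, _, _, _, orderElt_add F w ..⟩
  neg_mem' := by
    rintro _ ⟨a, b, c, d, rfl⟩
    exact ⟨_, _, _, _, orderElt_neg F w ..⟩
  mul_mem' := by
    rintro _ _ ⟨a, b, c, d, rfl⟩ ⟨a', b', c', d', rfl⟩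
    exact ⟨_, _, _, _, orderElt_mul F hw ..⟩

theorem adjoin_le_orderSubring (hw : w ^ 3 - 11 * w - 11 = 0) :
    Algebra.adjoin ℤ {algebraMap F _ (algebraMap R F w), quatI _ _, quatK _} ≤
      subalgebraOfSubring (orderSubring F hw) := by
  refine Algebra.adjoin_le ?_
  rintro _ (rfl | rfl | rfl)
  · exact ⟨_, _, _, _, algebraMap_eq_orderElt F w w⟩
  · exact ⟨_, _, _, _, quatI_eq_orderElt F w⟩
  · exact ⟨_, _, _, _, quatK_eq_orderElt F w⟩

end

theorem stmt13_general (F : Type) [Field F] [NumberField F] (w : F)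
    (hw : w ^ 3 - 11 * w - 11 = 0) :
    let B := ℍ[F, w + 1, -1]
    let i : B := ⟨0, 1, 0, 0⟩
    let k : B := ((2 : F)⁻¹) • (1 + (w ^ 2 + 1) • i + i * ⟨0, 0, 1, 0⟩)
    (∀ x ∈ Algebra.adjoin ℤ ({algebraMap F B w, i, k} : Set B),
        ∃ t n : F, IsIntegral ℤ t ∧ IsIntegral ℤ n ∧
          x + star x = algebraMap F B t ∧ x * star x = algebraMap F B n) ∧
    Submodule.span F ((Algebra.adjoin ℤ ({algebraMap F B w, i, k} : Set B) : Set B)) = ⊤ := by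
  intro B i k
  have hw_int : IsIntegral ℤ w := ⟨X ^ 3 - 11 * X - 11, by monicity!, by simpa using hw⟩
  set W : 𝓞 F := ⟨w, hw_int⟩
  have hW : W ^ 3 - 11 * W - 11 = 0 := RingOfIntegers.ext (by push_cast; exact hw)
  refine ⟨fun x hx => ?_, ?_⟩
  · obtain ⟨a, b, c, d, rfl⟩ := adjoin_le_orderSubring F hW hx
    exact ⟨_, _, RingOfIntegers.isIntegral_coe _, RingOfIntegers.isIntegral_coe _,
      orderElt_add_star F hW a b c d, orderElt_mul_star F hW a b c d⟩
  · have hw1 : w + 1 ≠ 0 := fun h => by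
      rw [eq_neg_of_add_eq_zero_left h] at hw
      norm_num at hw
    have hi : i ∈ Algebra.adjoin ℤ ({algebraMap F B w, i, k} : Set B) :=
      Algebra.subset_adjoin (by simp)
    have hk : k ∈ Algebra.adjoin ℤ ({algebraMap F B w, i, k} : Set B) :=
      Algebra.subset_adjoin (by simp)
    refine top_le_iff.1 ((span_one_quatI_quatK_eq_top hw1).ge.trans (Submodule.span_mono ?_))
    simp only [Set.insert_subset_iff, Set.singleton_subset_iff]
    exact ⟨one_mem _, hi, hk, mul_mem hi hk⟩

theorem stmt13 (F : Type) [Field F] [NumberField F] (w : F)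
    (hw : w ^ 3 - 11 * w - 11 = 0) (hgen : Algebra.adjoin ℚ {w} = ⊤)
    (hint : ∀ x : F, IsIntegral ℤ x ↔ x ∈ Algebra.adjoin ℤ {w}) :
    let B := ℍ[F, w + 1, -1]
    let i : B := ⟨0, 1, 0, 0⟩
    let k : B := ((2 : F)⁻¹) • (1 + (w ^ 2 + 1) • i + i * ⟨0, 0, 1, 0⟩)
    (∀ x ∈ Algebra.adjoin ℤ ({algebraMap F B w, i, k} : Set B),
        ∃ t n : F, IsIntegral ℤ t ∧ IsIntegral ℤ n ∧
          x + star x = algebraMap F B t ∧ x * star x = algebraMap F B n) ∧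
    Submodule.span F ((Algebra.adjoin ℤ ({algebraMap F B w, i, k} : Set B) : Set B)) = ⊤ :=
  stmt13_general F w hw
end
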